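/- Let n, h, j be natural numbers with h < n and h < j ≤ n. Let y : {1,…,n} → [0,1] and y_j ∈ [0,1] with y_n = 1, and for each i let [l_i, u_i] ⊆ [0,1] with l_i ≤ u_i. Define T(b) = (Π_{h<i≤n} b_i)·y_j + Σ_{h<k≤n} ((1−b_k)·Π_{k<i≤n} b_i)·y_k and T'(b) = (Π_{h<i<n} b_i)·y_j + Σ_{h<k<n} ((1−b_k)·Π_{k<i<n} b_i)·y_k. Then sup{T(b) : b_i ∈ [l_i,u_i] for all i} = 1 − l_n · inf{1 − T'(b) : b_i ∈ [l_i,u_i] for h < i < n}. -/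

import Mathlib

/-!
Peeling off the last example gives `T(b) = 1 - b_n (1 - T'(b))`, where `T'` does not depend on
`b_n` and `1 - T' ≥ 0` on the box, because `T'` is a convex combination of labels in `[0, 1]`.
Hence `T` is maximised by taking `b_n = l_n` and independently minimising `1 - T'` over the
remaining coordinates.
-/

open Finset

/-- `T' b = nnMarginal b y yj h n` and, as `Ioo h (n + 1) = Ioc h n`,
`T b = nnMarginal b y yj h (n + 1)`. -/
def nnMarginal {R : Type*} [CommRing R] (b y : ℕ → R) (c : R) (h m : ℕ) : R :=
  (∏ i ∈ Ioo h m, b i) * c + ∑ k ∈ Ioo h m, ((1 - b k) * ∏ i ∈ Ioo k m, b i) * y k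

section nnMarginal

variable {R : Type*} [CommRing R] (b y : ℕ → R) (c : R) {h m : ℕ}

theorem nnMarginal_of_le (hm : m ≤ h + 1) : nnMarginal b y c h m = c := by
  have hempty : Ioo h m = ∅ := eq_empty_of_forall_notMem fun i hi => by
    have := mem_Ioo.mp hi; omega
  simp [nnMarginal, hempty]

theorem nnMarginal_add_one (hm : h < m) :
    nnMarginal b y c h (m + 1) = b m * nnMarginal b y c h m + (1 - b m) * y m := by
  have insert_Ioo : ∀ k < m, Ioo k (m + 1) = insert m (Ioo k m) := fun k hk => by
    rw [Ioo_insert_right hk, Ioo_add_one_right_eq_Ioc]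
  have hterm : ∀ k ∈ Ioo h m, ((1 - b k) * ∏ i ∈ Ioo k (m + 1), b i) * y k
      = b m * (((1 - b k) * ∏ i ∈ Ioo k m, b i) * y k) := fun k hk => by
    rw [insert_Ioo k (mem_Ioo.mp hk).2, prod_insert right_notMem_Ioo]; ring
  rw [nnMarginal, nnMarginal, insert_Ioo h hm, prod_insert right_notMem_Ioo,
    sum_insert right_notMem_Ioo, Ioo_add_one_right_eq_Ioc m m, Ioc_self, prod_empty,
    sum_congr rfl hterm, ← mul_sum]
  ring

theorem nnMarginal_congr {b' : ℕ → R} (hb : ∀ i ∈ Ioo h m, b i = b' i) :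
    nnMarginal b y c h m = nnMarginal b' y c h m := by
  have hsub : ∀ k ∈ Ioo h m, ∏ i ∈ Ioo k m, b i = ∏ i ∈ Ioo k m, b' i := fun k hk =>
    prod_congr rfl fun i hi => hb i (Ioo_subset_Ioo_left (mem_Ioo.mp hk).1.le hi)
  rw [nnMarginal, nnMarginal, prod_congr rfl hb,
    sum_congr rfl fun k hk => by rw [hb k hk, hsub k hk]]

end nnMarginal

theorem nnMarginal_le_one {R : Type*} [CommRing R] [PartialOrder R] [IsOrderedRing R]
    {b y : ℕ → R} {c : R} {h : ℕ} (hc : c ≤ 1) :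
    ∀ {m : ℕ}, (∀ i ∈ Ioo h m, b i ∈ Set.Icc 0 1) → (∀ i ∈ Ioo h m, y i ≤ 1) →
      nnMarginal b y c h m ≤ 1
  | 0, _, _ => by rw [nnMarginal_of_le _ _ _ (by omega)]; exact hc
  | m + 1, hb, hy => by
    rcases le_or_gt m h with hmh | hhm
    · rw [nnMarginal_of_le _ _ _ (by omega)]; exact hc
    · have hm : m ∈ Ioo h (m + 1) := mem_Ioo.mpr ⟨hhm, m.lt_succ_self⟩
      have hsub : Ioo h m ⊆ Ioo h (m + 1) := Ioo_subset_Ioo_right m.le_succ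
      have ih := nnMarginal_le_one hc (fun i hi => hb i (hsub hi)) fun i hi => hy i (hsub hi)
      obtain ⟨hb0, hb1⟩ := hb m hm
      calc nnMarginal b y c h (m + 1)
          = b m * nnMarginal b y c h m + (1 - b m) * y m := nnMarginal_add_one b y c hhm
        _ ≤ b m * 1 + (1 - b m) * 1 := by
          gcongr
          exact hy m hm
        _ = 1 := by ring

theorem sSup_one_sub_mul_image_box {n : ℕ} {s : Set ℕ} (hn : n ∉ s) {l u : ℕ → ℝ}
    (hlu : ∀ i, l i ≤ u i) (hl : 0 ≤ l n) {G : (ℕ → ℝ) → ℝ}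
    (hG : ∀ b b', Set.EqOn b b' s → G b = G b')
    (hG0 : ∀ b ∈ {b : ℕ → ℝ | ∀ i ∈ s, b i ∈ Set.Icc (l i) (u i)}, 0 ≤ G b) :
    sSup ((fun b => 1 - b n * G b) '' {b | ∀ i, b i ∈ Set.Icc (l i) (u i)})
      = 1 - l n * sInf (G '' {b | ∀ i ∈ s, b i ∈ Set.Icc (l i) (u i)}) := by
  classical
  have hlS : l ∈ {b : ℕ → ℝ | ∀ i ∈ s, b i ∈ Set.Icc (l i) (u i)} := fun i _ =>
    ⟨le_rfl, hlu i⟩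
  have hbdd : BddBelow (G '' {b | ∀ i ∈ s, b i ∈ Set.Icc (l i) (u i)}) :=
    ⟨0, by rintro _ ⟨b, hb, rfl⟩; exact hG0 b hb⟩
  have hanti : Antitone fun x : ℝ => 1 - l n * x := fun x x' hx =>
    sub_le_sub_left (mul_le_mul_of_nonneg_left hx hl) 1
  refine (csSup_eq_csSup_of_forall_exists_le ?_ ?_).trans
    (hanti.map_csInf_of_continuousAt (by fun_prop) ⟨G l, Set.mem_image_of_mem G hlS⟩ hbdd).symm
  · rintro _ ⟨b, hb, rfl⟩
    refine ⟨1 - l n * G b, Set.mem_image_of_mem _ (Set.mem_image_of_mem G fun i _ => hb i), ?_⟩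
    have := mul_le_mul_of_nonneg_right (hb n).1 (hG0 b fun i _ => hb i)
    dsimp only
    linarith
  · rintro _ ⟨_, ⟨b, hb, rfl⟩, rfl⟩
    refine ⟨_, ⟨s.piecewise b l, fun i => ?_, rfl⟩, ?_⟩
    · by_cases hi : i ∈ s
      · simpa [hi] using hb i hi
      · simpa [hi] using hlu i
    · dsimp only
      rw [Set.piecewise_eq_of_notMem _ _ _ hn, hG _ b (Set.piecewise_eqOn s b l)]

theorem stmt_19_general (n h : ℕ) (hhn : h < n)
    (y : ℕ → ℝ) (yj : ℝ) (hy : ∀ i, y i ∈ Set.Icc (0 : ℝ) 1)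
    (hyj : yj ∈ Set.Icc (0 : ℝ) 1) (hyn : y n = 1)
    (l u : ℕ → ℝ) (hlu : ∀ i, l i ≤ u i) (hl : ∀ i, 0 ≤ l i) (hu : ∀ i, u i ≤ 1)
    (T T' : (ℕ → ℝ) → ℝ)
    (hT : T = fun b => (∏ i ∈ Finset.Ioc h n, b i) * yj
        + ∑ k ∈ Finset.Ioc h n, ((1 - b k) * ∏ i ∈ Finset.Ioc k n, b i) * y k)
    (hT' : T' = fun b => (∏ i ∈ Finset.Ioo h n, b i) * yj
        + ∑ k ∈ Finset.Ioo h n, ((1 - b k) * ∏ i ∈ Finset.Ioo k n, b i) * y k) :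
    sSup (T '' {b | ∀ i, b i ∈ Set.Icc (l i) (u i)})
      = 1 - l n * sInf ((fun b => 1 - T' b) ''
          {b | ∀ i ∈ Set.Ioo h n, b i ∈ Set.Icc (l i) (u i)}) := by
  obtain rfl : T' = fun b => nnMarginal b y yj h n := hT'
  have hT_eq : T = fun b => 1 - b n * (1 - nnMarginal b y yj h n) := by
    funext b
    calc T b = nnMarginal b y yj h (n + 1) := by
          simp only [hT, nnMarginal, Ioo_add_one_right_eq_Ioc]
      _ = 1 - b n * (1 - nnMarginal b y yj h n) := by
          rw [nnMarginal_add_one _ _ _ hhn, hyn]; ring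
  rw [hT_eq]
  refine sSup_one_sub_mul_image_box (by simp) hlu (hl n) (fun b b' hbb' => ?_) fun b hb => ?_
  · rw [nnMarginal_congr _ _ _ fun i hi => hbb' (by simpa using hi)]
  · rw [sub_nonneg]
    refine nnMarginal_le_one hyj.2 (fun i hi => ?_) fun i _ => (hy i).2
    obtain ⟨hli, hui⟩ := hb i (by simpa using hi)
    exact ⟨(hl i).trans hli, hui.trans (hu i)⟩

theorem stmt_19 (n h j : ℕ) (hhn : h < n) (hhj : h < j) (hjn : j ≤ n)
    (y : ℕ → ℝ) (yj : ℝ) (hy : ∀ i, y i ∈ Set.Icc (0 : ℝ) 1)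
    (hyj : yj ∈ Set.Icc (0 : ℝ) 1) (hyn : y n = 1)
    (l u : ℕ → ℝ) (hlu : ∀ i, l i ≤ u i) (hl : ∀ i, 0 ≤ l i) (hu : ∀ i, u i ≤ 1)
    (T T' : (ℕ → ℝ) → ℝ)
    (hT : T = fun b => (∏ i ∈ Finset.Ioc h n, b i) * yj
        + ∑ k ∈ Finset.Ioc h n, ((1 - b k) * ∏ i ∈ Finset.Ioc k n, b i) * y k)
    (hT' : T' = fun b => (∏ i ∈ Finset.Ioo h n, b i) * yj
        + ∑ k ∈ Finset.Ioo h n, ((1 - b k) * ∏ i ∈ Finset.Ioo k n, b i) * y k) :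
    sSup (T '' {b | ∀ i, b i ∈ Set.Icc (l i) (u i)})
      = 1 - l n * sInf ((fun b => 1 - T' b) ''
          {b | ∀ i ∈ Set.Ioo h n, b i ∈ Set.Icc (l i) (u i)}) :=
  stmt_19_general n h hhn y yj hy hyj hyn l u hlu hl hu T T' hT hT'
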